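/- arXiv:1709.01365 — 7 statements merged into one kernel-verified Lean document; each statement's English description precedes it below -/
import Mathlib

section
/- For every positive integer q and all integers m, n₁, n₂, the generalized Kloosterman sum S(m,n₁,n₂;q) is invariant under any permutation of the three arguments m, n₁, n₂; in particular S(m,n₁,n₂;q) = S(n₁,m,n₂;q) and S(m,n₁,n₂;q) = S(m,n₂,n₁;q). -/
/-- `e(x) = exp(2πix)`. -/
noncomputable def e (x : ℝ) : ℂ := Complex.exp (2 * Real.pi * Complex.I * x)

/-- The generalized Kloosterman sum
`S(m,n₁,n₂;q) = Σ_{a=1}^{q} Σ_{b=1}^{q} δ_q(ab − m) · e((a·n₁ + b·n₂)/q)`. -/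
noncomputable def Kl (m n₁ n₂ : ℤ) (q : ℕ) : ℂ :=
  ∑ a ∈ Finset.Icc 1 q, ∑ b ∈ Finset.Icc 1 q,
    (if (q : ℤ) ∣ ((a : ℤ) * (b : ℤ) - m) then (1 : ℂ) else 0) *
      e (((a : ℝ) * (n₁ : ℝ) + (b : ℝ) * (n₂ : ℝ)) / q)

/-! Detecting the congruence `ab ≡ m (mod q)` by orthogonality of additive characters in a third
variable `c` turns `q · S(m,n₁,n₂;q)` into the exponential sum
`Σ_{a,b,c} e((a n₁ + b n₂ + c m - abc)/q)`, which is visibly symmetric in `(n₁, n₂, m)`. -/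

open Finset

lemma e_add (x y : ℝ) : e (x + y) = e x * e y := by
  simp [e, mul_add, Complex.exp_add]

lemma e_intCast (n : ℤ) : e n = 1 := by
  rw [e, ← Complex.exp_int_mul_two_pi_mul_I n]
  push_cast
  ring_nf

lemma e_natCast_mul (n : ℕ) (x : ℝ) : e (n * x) = e x ^ n := by
  rw [e, e, ← Complex.exp_nat_mul]
  push_cast
  ring_nf

lemma exists_eq_intCast_of_e_eq_one {x : ℝ} (h : e x = 1) : ∃ n : ℤ, x = n := by
  obtain ⟨n, hn⟩ := Complex.exp_eq_one_iff.mp h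
  have : (x : ℂ) = n := mul_right_cancel₀ Complex.two_pi_I_ne_zero (by rw [← hn]; ring)
  exact ⟨n, by exact_mod_cast this⟩

lemma sum_Icc_e_mul_div (q : ℕ) (k : ℤ) :
    ∑ c ∈ Icc 1 q, e (c * k / q) = if (q : ℤ) ∣ k then (q : ℂ) else 0 := by
  rcases q.eq_zero_or_pos with rfl | hq
  · simp
  have hq' : (q : ℝ) ≠ 0 := by positivity
  split_ifs with hk
  · obtain ⟨t, rfl⟩ := hk
    have (c : ℕ) : e (c * ((q * t : ℤ) : ℝ) / q) = 1 := by
      rw [show (c : ℝ) * ((q * t : ℤ) : ℝ) / q = ((c * t : ℤ) : ℝ) by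
        push_cast; field_simp]
      exact e_intCast _
    simp only [this, sum_const, Nat.card_Icc, add_tsub_cancel_right, nsmul_eq_mul, mul_one]
  · set ζ := e (k / q)
    have hζ : ζ ≠ 1 := fun h => hk <| by
      obtain ⟨n, hn⟩ := exists_eq_intCast_of_e_eq_one h
      rw [div_eq_iff hq'] at hn
      exact ⟨n, by exact_mod_cast hn.trans (mul_comm _ _)⟩
    have hζq : ζ ^ q = 1 := by
      rw [← e_natCast_mul, mul_div_cancel₀ _ hq', e_intCast]
    calc ∑ c ∈ Icc 1 q, e (c * k / q) = ∑ c ∈ range q, ζ * ζ ^ c := by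
          rw [← Finset.Ico_add_one_right_eq_Icc, sum_Ico_eq_sum_range, Nat.add_sub_cancel]
          refine sum_congr rfl fun c _ => ?_
          rw [← pow_succ', ← e_natCast_mul, mul_div_assoc, add_comm]
      _ = 0 := by rw [← mul_sum, geom_sum_eq hζ, hζq]; simp

lemma sum_sum_sum_eq_sum_piFinset {α β : Type*} [AddCommMonoid β] (s : Finset α)
    (f : α → α → α → β) :
    ∑ a ∈ s, ∑ b ∈ s, ∑ c ∈ s, f a b c =
      ∑ x ∈ Fintype.piFinset fun _ : Fin 3 => s, f (x 0) (x 1) (x 2) := by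
  simp_rw [← sum_product']
  refine sum_nbij' (fun p => ![p.1, p.2.1, p.2.2]) (fun x => (x 0, x 1, x 2)) ?_ ?_ ?_ ?_ ?_
  · intro p hp
    simp only [mem_product] at hp
    simp only [Fintype.mem_piFinset, Fin.forall_fin_succ]
    simp [hp]
  · intro x hx
    simp only [Fintype.mem_piFinset] at hx
    simp [hx]
  · intro p _; rfl
  · intro x _; ext i; fin_cases i <;> rfl
  · intro p _; rfl

noncomputable def cubicExpSum {ι : Type*} [Fintype ι] [DecidableEq ι] (q : ℕ)
    (v : ι → ℤ) : ℂ :=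
  ∑ a ∈ Fintype.piFinset fun _ : ι => Icc 1 q,
    e ((∑ i, (a i : ℝ) * v i - ∏ i, (a i : ℝ)) / q)

lemma cubicExpSum_comp_perm {ι : Type*} [Fintype ι] [DecidableEq ι] (q : ℕ) (v : ι → ℤ)
    (σ : Equiv.Perm ι) : cubicExpSum q (v ∘ σ) = cubicExpSum q v := by
  refine sum_nbij' (· ∘ σ.symm) (· ∘ σ) ?_ ?_ ?_ ?_ ?_
  · intro a ha
    simp only [Fintype.mem_piFinset, Function.comp_apply] at ha ⊢
    exact fun i => ha _
  · intro a ha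
    simp only [Fintype.mem_piFinset, Function.comp_apply] at ha ⊢
    exact fun i => ha _
  · intro a _; ext i; simp
  · intro a _; ext i; simp
  · intro a _
    have hs := Equiv.sum_comp σ fun i => (a (σ.symm i) : ℝ) * v i
    have hp := Equiv.prod_comp σ fun i => (a (σ.symm i) : ℝ)
    simp only [Equiv.symm_apply_apply] at hs hp
    simp only [Function.comp_apply, hs, hp]

lemma Kl_eq_cubicExpSum (m n₁ n₂ : ℤ) (q : ℕ) :
    Kl m n₁ n₂ q = (q : ℂ)⁻¹ * cubicExpSum q ![n₁, n₂, m] := by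
  rcases q.eq_zero_or_pos with rfl | hq
  · simp [Kl]
  have hq' : (q : ℂ) ≠ 0 := Nat.cast_ne_zero.mpr hq.ne'
  have hdetect (a b : ℕ) :
      (if (q : ℤ) ∣ a * b - m then (1 : ℂ) else 0) * e ((a * n₁ + b * n₂) / q) =
        (q : ℂ)⁻¹ * ∑ c ∈ Icc 1 q, e ((a * n₁ + b * n₂ + c * m - a * b * c) / q) := by
    calc _ = (q : ℂ)⁻¹ * e ((a * n₁ + b * n₂) / q) *
          ∑ c ∈ Icc 1 q, e (c * (m - a * b : ℤ) / q) := by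
          rw [sum_Icc_e_mul_div]
          simp only [dvd_sub_comm]
          split_ifs
          · field_simp
          · simp
      _ = _ := by
          rw [mul_assoc, mul_sum]
          congr 1
          refine sum_congr rfl fun c _ => ?_
          rw [← e_add]
          congr 1
          push_cast
          ring
  simp_rw [Kl, hdetect, ← mul_sum, cubicExpSum, sum_sum_sum_eq_sum_piFinset]
  congr 1
  refine sum_congr rfl fun x _ => ?_
  simp [Fin.sum_univ_three, Fin.prod_univ_three]

theorem kloosterman_perm_invariant_general (q : ℕ) (m n₁ n₂ : ℤ) :
    (∀ σ : Equiv.Perm (Fin 3),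
      Kl (![m, n₁, n₂] (σ 0)) (![m, n₁, n₂] (σ 1)) (![m, n₁, n₂] (σ 2)) q
        = Kl m n₁ n₂ q) ∧
    Kl m n₁ n₂ q = Kl n₁ m n₂ q ∧
    Kl m n₁ n₂ q = Kl m n₂ n₁ q := by
  set v := ![m, n₁, n₂]
  -- `Kl x y z q` pairs `x` with the third summation variable, hence the rotation.
  have hKl (σ : Equiv.Perm (Fin 3)) :
      Kl (v (σ 0)) (v (σ 1)) (v (σ 2)) q = (q : ℂ)⁻¹ * cubicExpSum q v := by
    rw [Kl_eq_cubicExpSum, ← cubicExpSum_comp_perm q v (σ * finRotate 3)]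
    congr 2
    funext i
    fin_cases i <;> rfl
  refine ⟨fun σ => (hKl σ).trans (hKl 1).symm, ?_, ?_⟩
  · exact (hKl 1).trans (hKl (Equiv.swap 0 1)).symm
  · exact (hKl 1).trans (hKl (Equiv.swap 1 2)).symm

theorem kloosterman_perm_invariant (q : ℕ) (hq : 0 < q) (m n₁ n₂ : ℤ) :
    (∀ σ : Equiv.Perm (Fin 3),
      Kl (![m, n₁, n₂] (σ 0)) (![m, n₁, n₂] (σ 1)) (![m, n₁, n₂] (σ 2)) q
        = Kl m n₁ n₂ q) ∧
    Kl m n₁ n₂ q = Kl n₁ m n₂ q ∧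
    Kl m n₁ n₂ q = Kl m n₂ n₁ q :=
  kloosterman_perm_invariant_general q m n₁ n₂
end

section
/- (Selberg's identity) For every positive integer q and all positive integers m, n₁ and every integer n₂, one has S(m,n₁,n₂;q) = Σ_{d | gcd(m,n₁,q)} d · S(1, m·n₁/d², n₂; q/d). -/
/-!
Group the pairs `(a, b)` with `ab ≡ m (mod q)` by `d = gcd(b, q)`, writing `b = d b'` with `b'`
a unit modulo `q' = q / d`. Then `ab ≡ m` forces `d ∣ m` and `a ≡ b'⁻¹ (m / d) (mod q')`. Summing
`e(a n₁ / q)` over the `d` lifts of this residue gives `d` times `e(b'⁻¹ (m / d) (n₁ / d) / q')`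
when `d ∣ n₁` and `0` otherwise, and the remaining sum over `b'` is `S(1, m n₁ / d², n₂; q')`.
-/

open Finset ZMod

lemma e_intCast_div_eq_stdAddChar {N : ℕ} [NeZero N] (k : ℤ) :
    e ((k : ℝ) / N) = stdAddChar (k : ZMod N) := by
  rw [stdAddChar_coe, e]
  push_cast
  congr 1
  ring

lemma stdAddChar_natCast_mul {N k M : ℕ} [NeZero N] [NeZero M] (h : N = k * M) (x : ℤ) :
    stdAddChar ((k : ZMod N) * (x : ZMod N)) = stdAddChar (x : ZMod M) := by
  have hk : k ≠ 0 := left_ne_zero_of_mul (h ▸ NeZero.ne N)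
  rw [← Int.cast_natCast k, ← Int.cast_mul, stdAddChar_coe, stdAddChar_coe, h]
  push_cast
  field_simp

lemma sum_range_natCast {M : Type*} [AddCommMonoid M] (N : ℕ) [NeZero N] (f : ZMod N → M) :
    ∑ a ∈ range N, f a = ∑ x, f x :=
  sum_nbij' (fun a => (a : ZMod N)) ZMod.val (by simp) (fun x _ => by simpa using x.val_lt)
    (fun a ha => val_natCast_of_lt (mem_range.mp ha)) (fun x _ => natCast_zmod_val x) (by simp)

lemma sum_Icc_natCast {M : Type*} [AddCommMonoid M] (N : ℕ) [NeZero N] (f : ZMod N → M) :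
    ∑ a ∈ Icc 1 N, f a = ∑ x, f x := by
  rw [← Ico_add_one_right_eq_Icc, sum_Ico_eq_sum_range, Nat.add_sub_cancel,
    ← Equiv.sum_comp (Equiv.addLeft (1 : ZMod N)), ← sum_range_natCast]
  simp

lemma sum_range_stdAddChar_mul (N : ℕ) [NeZero N] (n : ℤ) :
    ∑ j ∈ range N, stdAddChar ((j : ZMod N) * (n : ZMod N)) =
      if (N : ℤ) ∣ n then (N : ℂ) else 0 := by
  rw [sum_range_natCast N (fun x => stdAddChar (x * (n : ZMod N))),
    AddChar.sum_mulShift _ (isPrimitive_stdAddChar N), ZMod.card]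
  simp only [intCast_zmod_eq_zero_iff_dvd, Nat.cast_ite, Nat.cast_zero]

lemma sum_range_mul {M : Type*} [AddCommMonoid M] (f : ℕ → M) (k d : ℕ) :
    ∑ a ∈ range (k * d), f a = ∑ a ∈ range k, ∑ j ∈ range d, f (a + k * j) := by
  rw [sum_comm]
  induction d with
  | zero => simp
  | succ d ih => rw [Nat.mul_succ, sum_range_add, ih, sum_range_succ]; simp only [add_comm]

lemma ZMod.mul_natCast_eq_iff_eq_inv_mul {N b : ℕ} (hb : b.Coprime N) (a y : ZMod N) :
    a * b = y ↔ a = (b : ZMod N)⁻¹ * y := by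
  have hinv := coe_mul_inv_eq_one b hb
  constructor <;> intro h
  · linear_combination (-a) * hinv + (b : ZMod N)⁻¹ * h
  · linear_combination (b : ZMod N) * h + y * hinv

lemma Int.mul_dvd_sub_iff {d q x m : ℤ} (hd : d ≠ 0) :
    d * q ∣ d * x - m ↔ d ∣ m ∧ q ∣ x - m / d := by
  constructor
  · intro h
    have hdm : d ∣ m := (dvd_sub_right (dvd_mul_right d x)).mp ((dvd_mul_right d q).trans h)
    obtain ⟨t, rfl⟩ := hdm
    rw [Int.mul_ediv_cancel_left t hd, ← mul_sub, mul_dvd_mul_iff_left hd] at *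
    exact ⟨dvd_mul_right d t, h⟩
  · rintro ⟨⟨t, rfl⟩, h⟩
    rw [Int.mul_ediv_cancel_left t hd] at h
    rw [← mul_sub]
    exact mul_dvd_mul_left d h

lemma natCast_mul_eq_intCast_iff {d q b : ℕ} [NeZero d] (hb : b.Coprime q) (a : ℕ) (m : ℤ) :
    (a : ZMod (d * q)) * (d * b : ℕ) = m ↔
      (d : ℤ) ∣ m ∧ (a : ZMod q) = (b : ZMod q)⁻¹ * ((m / d : ℤ) : ZMod q) := by
  have h₁ : (a : ZMod (d * q)) * (d * b : ℕ) = m ↔ ((d * q : ℕ) : ℤ) ∣ d * (a * b) - m := by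
    rw [← ZMod.intCast_eq_intCast_iff_dvd_sub, eq_comm]
    push_cast
    ring_nf
  have h₂ : (a : ZMod q) * b = ((m / d : ℤ) : ZMod q) ↔ (q : ℤ) ∣ a * b - m / d := by
    rw [← ZMod.intCast_eq_intCast_iff_dvd_sub, eq_comm]
    push_cast
    rfl
  rw [h₁, ← ZMod.mul_natCast_eq_iff_eq_inv_mul hb, h₂, Nat.cast_mul]
  exact Int.mul_dvd_sub_iff (Int.natCast_ne_zero.mpr (NeZero.ne d))

lemma stdAddChar_natCast_add_mul_mul {d q : ℕ} [NeZero d] [NeZero q] (a j : ℕ) (n : ℤ) :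
    stdAddChar (((a + q * j : ℕ) : ZMod (d * q)) * (n : ZMod (d * q))) =
      stdAddChar ((a : ZMod (d * q)) * (n : ZMod (d * q))) *
        stdAddChar ((j : ZMod d) * (n : ZMod d)) := by
  rw [← Int.cast_natCast j, ← Int.cast_mul, ← stdAddChar_natCast_mul (mul_comm d q) (j * n),
    ← AddChar.map_add_eq_mul]
  push_cast
  congr 1
  ring

lemma sum_stdAddChar_of_mul_eq {d q b : ℕ} [NeZero d] [NeZero q] (hb : b.Coprime q) (m n : ℤ) :
    ∑ a : ZMod (d * q), (if a * (d * b : ℕ) = m then stdAddChar (a * (n : ZMod (d * q))) else 0) =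
      if (d : ℤ) ∣ m ∧ (d : ℤ) ∣ n then
        (d : ℂ) * stdAddChar ((b : ZMod q)⁻¹ * ((m / d : ℤ) : ZMod q) * ((n / d : ℤ) : ZMod q))
      else 0 := by
  -- Writing `a = a' + q j` with `a' < q`, `j < d`, the condition only sees `a'`, and the sum
  -- over `j` is a complete character sum modulo `d`, which vanishes unless `d ∣ n`.
  set F : ZMod (d * q) → ℂ :=
    fun a => if a * (d * b : ℕ) = m then stdAddChar (a * (n : ZMod (d * q))) else 0 with hF
  have hshift (a j : ℕ) :
      F (a + q * j : ℕ) = F a * stdAddChar ((j : ZMod d) * (n : ZMod d)) := by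
    have hcond :
        ((a + q * j : ℕ) : ZMod (d * q)) * (d * b : ℕ) = (a : ZMod (d * q)) * (d * b : ℕ) := by
      have : ((d * q : ℕ) : ZMod (d * q)) = 0 := ZMod.natCast_self _
      push_cast at this ⊢
      linear_combination (j * b : ZMod (d * q)) * this
    simp only [hF, hcond, stdAddChar_natCast_add_mul_mul]
    split_ifs <;> simp
  rw [← sum_range_natCast (d * q) F, show range (d * q) = range (q * d) by rw [mul_comm],
    sum_range_mul (fun a => F a) q d]
  simp only [hshift, ← mul_sum, sum_range_stdAddChar_mul]
  by_cases hn : (d : ℤ) ∣ n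
  · obtain ⟨n', rfl⟩ := hn
    have hd : (d : ℤ) ≠ 0 := Int.natCast_ne_zero.mpr (NeZero.ne d)
    set x : ZMod q := (b : ZMod q)⁻¹ * ((m / d : ℤ) : ZMod q)
    have hF' (a : ℕ) :
        F a = if (d : ℤ) ∣ m ∧ (a : ZMod q) = x then stdAddChar (x * (n' : ZMod q)) else 0 := by
      simp only [hF, natCast_mul_eq_intCast_iff hb]
      split_ifs with h
      · rw [← show (a : ZMod q) = x from h.2]
        convert stdAddChar_natCast_mul rfl ((a : ℤ) * n') using 2 <;> push_cast <;> ring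
      · rfl
    simp only [hF', if_pos (dvd_mul_right _ _), Int.mul_ediv_cancel_left n' hd, ← sum_mul]
    rw [sum_range_natCast q
      (fun y => if (d : ℤ) ∣ m ∧ y = x then stdAddChar (x * (n' : ZMod q)) else 0)]
    by_cases hm : (d : ℤ) ∣ m <;> simp [hm, mul_comm]
  · simp [hn]

lemma sum_range_filter_gcd_eq {M : Type*} [AddCommMonoid M] (f : ℕ → M) {d q : ℕ} (hd : 0 < d)
    (hdq : d ∣ q) :
    ∑ b ∈ range q with b.gcd q = d, f b =
      ∑ b ∈ range (q / d) with b.Coprime (q / d), f (d * b) := by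
  obtain ⟨k, rfl⟩ := hdq
  rw [Nat.mul_div_cancel_left k hd]
  symm
  refine sum_nbij' (d * ·) (· / d) (fun b hb => ?_) (fun b hb => ?_) (fun b _ => ?_)
    (fun b hb => ?_) (fun _ _ => rfl)
  · simp only [mem_filter, mem_range] at hb ⊢
    exact ⟨by gcongr; exact hb.1, by rw [Nat.gcd_mul_left, hb.2, mul_one]⟩
  · simp only [mem_filter, mem_range] at hb ⊢
    obtain ⟨c, rfl⟩ : d ∣ b := hb.2 ▸ Nat.gcd_dvd_left b (d * k)
    rw [Nat.gcd_mul_left, mul_eq_left₀ hd.ne'] at hb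
    rw [Nat.mul_div_cancel_left c hd]
    exact ⟨(mul_lt_mul_iff_right₀ hd).mp hb.1, hb.2⟩
  · exact Nat.mul_div_cancel_left b hd
  · simp only [mem_filter] at hb
    exact Nat.mul_div_cancel' (hb.2 ▸ Nat.gcd_dvd_left b (d * k))

lemma sum_zmod_eq_sum_divisors {M : Type*} [AddCommMonoid M] (q : ℕ) [NeZero q] (f : ZMod q → M) :
    ∑ x, f x = ∑ d ∈ q.divisors, ∑ b ∈ range (q / d) with b.Coprime (q / d), f (d * b : ℕ) := by
  rw [← sum_range_natCast, ← sum_fiberwise_of_maps_to (g := fun b => b.gcd q)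
    (t := q.divisors) (fun b _ => Nat.mem_divisors.mpr ⟨Nat.gcd_dvd_right b q, NeZero.ne q⟩)]
  exact sum_congr rfl fun d hd => sum_range_filter_gcd_eq (fun b => f b)
    (Nat.pos_of_mem_divisors hd) (Nat.dvd_of_mem_divisors hd)

lemma Kl_eq_sum_zmod (m n₁ n₂ : ℤ) (q : ℕ) [NeZero q] :
    Kl m n₁ n₂ q = ∑ a : ZMod q, ∑ b : ZMod q,
      if a * b = m then stdAddChar (a * n₁ + b * n₂ : ZMod q) else 0 := by
  rw [Kl, ← sum_Icc_natCast]
  refine sum_congr rfl fun a _ => ?_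
  rw [← sum_Icc_natCast]
  refine sum_congr rfl fun b _ => ?_
  have harg : ((a : ℝ) * n₁ + (b : ℝ) * n₂) = ((a * n₁ + b * n₂ : ℤ) : ℝ) := by push_cast; ring
  have hdvd : (q : ℤ) ∣ a * b - m ↔ (a : ZMod q) * b = m := by
    rw [← ZMod.intCast_eq_intCast_iff_dvd_sub, eq_comm]; push_cast; rfl
  rw [harg, e_intCast_div_eq_stdAddChar, if_congr hdvd rfl rfl, ite_mul, one_mul, zero_mul]
  push_cast
  rfl

lemma Kl_one_eq_sum_coprime (M n₂ : ℤ) (q : ℕ) [NeZero q] :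
    Kl 1 M n₂ q = ∑ b ∈ range q with b.Coprime q,
      stdAddChar ((b : ZMod q)⁻¹ * (M : ZMod q) + (b : ZMod q) * (n₂ : ZMod q)) := by
  rw [Kl_eq_sum_zmod, sum_comm, ← sum_range_natCast, sum_filter]
  refine sum_congr rfl fun b _ => ?_
  split_ifs with hb
  · simp only [Int.cast_one, ZMod.mul_natCast_eq_iff_eq_inv_mul hb, mul_one, sum_ite_eq',
      mem_univ, if_true]
  · refine sum_eq_zero fun a _ => if_neg fun h => hb ?_
    rw [Int.cast_one] at h
    exact (ZMod.isUnit_iff_coprime b q).mp (IsUnit.of_mul_eq_one_right _ h)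

lemma Kl_eq_sum_divisors (m n₁ n₂ : ℤ) (q : ℕ) [NeZero q] :
    Kl m n₁ n₂ q = ∑ d ∈ q.divisors,
      if (d : ℤ) ∣ m ∧ (d : ℤ) ∣ n₁ then (d : ℂ) * Kl 1 (m / d * (n₁ / d)) n₂ (q / d) else 0 := by
  rw [Kl_eq_sum_zmod, sum_comm, sum_zmod_eq_sum_divisors]
  refine sum_congr rfl fun d hd => ?_
  obtain ⟨k, rfl⟩ := Nat.dvd_of_mem_divisors hd
  have : NeZero d := ⟨(Nat.pos_of_mem_divisors hd).ne'⟩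
  have : NeZero k := ⟨right_ne_zero_of_mul (NeZero.ne (d * k))⟩
  rw [Nat.mul_div_cancel_left k (Nat.pos_of_mem_divisors hd), Kl_one_eq_sum_coprime]
  have hterm (b : ℕ) (hb : b.Coprime k) :
      ∑ a : ZMod (d * k), (if a * (d * b : ℕ) = m then
        stdAddChar (a * (n₁ : ZMod (d * k)) + ((d * b : ℕ) : ZMod (d * k)) * (n₂ : ZMod (d * k)))
        else 0) =
      if (d : ℤ) ∣ m ∧ (d : ℤ) ∣ n₁ then (d : ℂ) * stdAddChar ((b : ZMod k)⁻¹ *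
        ((m / d * (n₁ / d) : ℤ) : ZMod k) + (b : ZMod k) * (n₂ : ZMod k)) else 0 := by
    have hn₂ : stdAddChar (((d * b : ℕ) : ZMod (d * k)) * (n₂ : ZMod (d * k))) =
        stdAddChar ((b : ZMod k) * (n₂ : ZMod k)) := by
      convert stdAddChar_natCast_mul rfl ((b : ℤ) * n₂) using 2 <;> push_cast <;> ring
    simp only [AddChar.map_add_eq_mul, hn₂, ← ite_zero_mul, ← sum_mul,
      sum_stdAddChar_of_mul_eq hb]
    split_ifs <;> simp only [Int.cast_mul, mul_assoc, zero_mul]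
  rw [sum_congr rfl fun b hb => hterm b (mem_filter.mp hb).2]
  split_ifs <;> simp [mul_sum]

theorem selberg_identity_general (q : ℕ) (hq : 0 < q) (m n₁ : ℕ)
    (n₂ : ℤ) :
    Kl (m : ℤ) (n₁ : ℤ) n₂ q
      = ∑ d ∈ (Nat.gcd m (Nat.gcd n₁ q)).divisors,
          (d : ℂ) * Kl 1 ((m * n₁ / d ^ 2 : ℕ) : ℤ) n₂ (q / d) := by
  have : NeZero q := ⟨hq.ne'⟩
  have hdivisors :
      {d ∈ q.divisors | ((d : ℕ) : ℤ) ∣ m ∧ ((d : ℕ) : ℤ) ∣ n₁} = (m.gcd (n₁.gcd q)).divisors := by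
    rw [← Nat.divisors_filter_dvd_of_dvd hq.ne'
      ((Nat.gcd_dvd_right _ _).trans (Nat.gcd_dvd_right _ _))]
    refine filter_congr fun d hd => ?_
    simp only [Int.natCast_dvd_natCast, Nat.dvd_gcd_iff, Nat.dvd_of_mem_divisors hd, and_true]
  rw [Kl_eq_sum_divisors, ← sum_filter, hdivisors]
  refine sum_congr rfl fun d hd => ?_
  have hd' := Nat.dvd_gcd_iff.mp (Nat.dvd_of_mem_divisors hd)
  rw [sq, ← Nat.div_mul_div_comm hd'.1 (Nat.dvd_gcd_iff.mp hd'.2).1]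
  push_cast [Int.natCast_ediv]
  rfl

/-- Selberg's identity. -/
theorem selberg_identity (q : ℕ) (hq : 0 < q) (m n₁ : ℕ) (hm : 0 < m) (hn₁ : 0 < n₁)
    (n₂ : ℤ) :
    Kl (m : ℤ) (n₁ : ℤ) n₂ q
      = ∑ d ∈ (Nat.gcd m (Nat.gcd n₁ q)).divisors,
          (d : ℂ) * Kl 1 ((m * n₁ / d ^ 2 : ℕ) : ℤ) n₂ (q / d) :=
  selberg_identity_general q hq m n₁ n₂
end

section
/- For every positive integer l and every complex number s with Re(s) > 1, one has Σ_{q=1}^{∞} q^{−(1+s)} · #{(a,b) : 1 ≤ a,b ≤ q, a·b ≡ l² (mod q)} = σ_{−s}(l²) · ζ(s)/ζ(1+s), where ζ is the Riemann zeta function. -/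
/-!
Reduce modulo `q`. For fixed `a`, the congruence `a * b ≡ n` has `gcd(a, q)` solutions `b` when
`gcd(a, q) ∣ n` and none otherwise, and exactly `φ(q / d)` residues `a` have `gcd(a, q) = d`. So the
number of pairs is `∑_{d ∣ q, d ∣ n} d φ(q / d)`, the Dirichlet convolution of `d ↦ d [d ∣ n]` with
`φ`. Its L-series at `1 + s` is the product of `∑_{d ∣ n} d^{-s} = σ_{-s}(n)` and
`∑ φ(q) q^{-1-s} = ζ(s) / ζ(1 + s)`, the latter because `φ ⋆ 1 = id`.
-/

/-- `σ_w(n) = Σ_{d | n} d^w`, the sum over the positive divisors of `n`. -/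
noncomputable def sigmaC (w : ℂ) (n : ℕ) : ℂ := ∑ d ∈ n.divisors, (d : ℂ) ^ w

open Finset
open scoped Nat LSeries.notation

namespace ZMod
variable {q : ℕ}

lemma range_mulLeft (a : ZMod q) :
    (AddMonoidHom.mulLeft a).range = AddSubgroup.zmultiples a := by
  ext b
  constructor
  · rintro ⟨c, rfl⟩
    exact ⟨c.cast, by simp [mul_comm]⟩
  · rintro ⟨k, rfl⟩
    exact ⟨k, by simp [mul_comm]⟩

variable [NeZero q]

lemma card_ker_mulLeft (a : ZMod q) : Nat.card (AddMonoidHom.mulLeft a).ker = q.gcd a.val := by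
  have hq : 0 < q := q.pos_of_neZero
  have hrange : Nat.card (AddMonoidHom.mulLeft a).range = q / q.gcd a.val := by
    rw [range_mulLeft, Nat.card_zmultiples, ← addOrderOf_coe _ hq.ne', natCast_zmod_val]
  have hprod := (AddMonoidHom.mulLeft a).ker.card_mul_index
  rw [AddSubgroup.index_ker, hrange, Nat.card_zmod] at hprod
  have hpos : 0 < q / q.gcd a.val :=
    Nat.div_pos (Nat.gcd_le_left _ hq) (Nat.gcd_pos_of_pos_left _ hq)
  have hdiv : q.gcd a.val * (q / q.gcd a.val) = q := Nat.mul_div_cancel' (Nat.gcd_dvd_left _ _)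
  exact Nat.eq_of_mul_eq_mul_right hpos (hprod.trans hdiv.symm)

lemma natCast_mem_range_mul_iff (a : ZMod q) (n : ℕ) :
    (n : ZMod q) ∈ Set.range (a * ·) ↔ q.gcd a.val ∣ n := by
  constructor
  · rintro ⟨b, hb⟩
    have hcast := congrArg (castHom (Nat.gcd_dvd_left q a.val) (ZMod (q.gcd a.val))) hb
    rwa [map_mul, map_natCast, castHom_apply, cast_eq_val,
      (natCast_eq_zero_iff _ _).mpr (Nat.gcd_dvd_right _ _), zero_mul, eq_comm,
      natCast_eq_zero_iff] at hcast
  · rintro ⟨k, rfl⟩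
    refine ⟨a⁻¹ * k, ?_⟩
    simp only [← mul_assoc, mul_inv_eq_gcd, Nat.gcd_comm, Nat.cast_mul]

lemma card_filter_mul_eq_natCast (a : ZMod q) (n : ℕ) :
    #{b | a * b = n} = if q.gcd a.val ∣ n then q.gcd a.val else 0 := by
  split_ifs with h
  · have hfiber := AddMonoidHom.card_fiber_eq_of_mem_range (AddMonoidHom.mulLeft a)
      ((natCast_mem_range_mul_iff a n).mpr h) ⟨0, mul_zero a⟩
    simp only [AddMonoidHom.coe_mulLeft] at hfiber
    rw [show #{b | a * b = n} = #{b | a * b = 0} from hfiber, ← card_ker_mulLeft,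
      ← Nat.card_eq_finsetCard]
    exact Nat.card_congr (Equiv.subtypeEquivRight fun b => by simp)
  · simp only [card_eq_zero, filter_eq_empty_iff, mem_univ, true_implies]
    exact fun b hb => h ((natCast_mem_range_mul_iff a n).mp ⟨b, hb⟩)

lemma sum_Icc_natCast {M : Type*} [AddCommMonoid M] (f : ZMod q → M) :
    ∑ a ∈ Icc 1 q, f a = ∑ x, f x := by
  refine sum_nbij' Nat.cast (fun x => (x - 1).val + 1) (by simp) (fun x _ => ?_)
    (fun a ha => ?_) (fun x _ => by simp) (fun _ _ => rfl)
  · simpa [Nat.one_le_iff_ne_zero, Nat.add_one_le_iff] using val_lt (x - 1)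
  · obtain ⟨h1, h2⟩ := mem_Icc.mp ha
    rw [← Nat.cast_one, ← Nat.cast_sub h1, val_cast_of_lt (by omega), Nat.sub_add_cancel h1]

lemma sum_comp_gcd_val {M : Type*} [AddCommMonoid M] (F : ℕ → M) :
    ∑ x : ZMod q, F (q.gcd x.val) = ∑ d ∈ q.divisors, φ (q / d) • F d := by
  have hrange : ∑ x : ZMod q, F (q.gcd x.val) = ∑ k ∈ range q, F (q.gcd k) :=
    sum_nbij' val Nat.cast (by simp [val_lt]) (by simp) (by simp)
      (fun k hk => val_cast_of_lt (mem_range.mp hk)) (by simp)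
  rw [hrange, ← sum_fiberwise_of_maps_to (g := q.gcd) (t := q.divisors)
      (fun k _ => Nat.mem_divisors.2 ⟨Nat.gcd_dvd_left _ _, NeZero.ne q⟩)]
  refine sum_congr rfl fun d hd => ?_
  rw [sum_congr rfl fun k hk => by rw [(mem_filter.mp hk).2], sum_const,
    Nat.totient_div_of_dvd (Nat.dvd_of_mem_divisors hd)]

end ZMod

theorem card_mul_sub_dvd_eq_sum_divisors {q : ℕ} (hq : q ≠ 0) (n : ℕ) :
    #{p ∈ Icc 1 q ×ˢ Icc 1 q | (q : ℤ) ∣ (p.1 : ℤ) * p.2 - n} =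
      ∑ d ∈ q.divisors, (if d ∣ n then d else 0) * φ (q / d) := by
  have : NeZero q := ⟨hq⟩
  have hdvd (a b : ℕ) : (q : ℤ) ∣ (a : ℤ) * b - n ↔ (a : ZMod q) * b = n := by
    rw [← ZMod.intCast_zmod_eq_zero_iff_dvd]
    push_cast
    exact sub_eq_zero
  calc #{p ∈ Icc 1 q ×ˢ Icc 1 q | (q : ℤ) ∣ (p.1 : ℤ) * p.2 - n}
      = ∑ a ∈ Icc 1 q, ∑ b ∈ Icc 1 q, if (a : ZMod q) * b = n then 1 else 0 := by
        simp_rw [card_filter, sum_product, hdvd]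
    _ = ∑ x : ZMod q, #{y | x * y = n} := by
        rw [ZMod.sum_Icc_natCast fun x : ZMod q =>
          ∑ b ∈ Icc 1 q, if x * b = (n : ZMod q) then 1 else 0]
        refine sum_congr rfl fun x _ => ?_
        rw [card_filter, ZMod.sum_Icc_natCast fun y => if x * y = (n : ZMod q) then 1 else 0]
    _ = ∑ x : ZMod q, if q.gcd x.val ∣ n then q.gcd x.val else 0 := by
        simp_rw [ZMod.card_filter_mul_eq_natCast]
    _ = ∑ d ∈ q.divisors, (if d ∣ n then d else 0) * φ (q / d) := by
        rw [ZMod.sum_comp_gcd_val fun d => if d ∣ n then d else 0]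
        simp_rw [smul_eq_mul, mul_comm]

namespace LSeries

lemma term_natCast_mul (f : ℕ → ℂ) (s : ℂ) : term (fun n => n * f n) (1 + s) = term f s := by
  ext n
  rcases eq_or_ne n 0 with rfl | hn
  · simp
  · have hn' : (n : ℂ) ≠ 0 := Nat.cast_ne_zero.mpr hn
    rw [term_of_ne_zero hn, term_of_ne_zero hn, Complex.cpow_add _ _ hn', Complex.cpow_one,
      mul_div_mul_left _ _ hn']

end LSeries

lemma LSeriesHasSum.natCast_mul {f : ℕ → ℂ} {s a : ℂ} (h : LSeriesHasSum f s a) :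
    LSeriesHasSum (fun n => n * f n) (1 + s) a := by
  rwa [LSeriesHasSum, LSeries.term_natCast_mul]

lemma LSeriesHasSum_indicator_dvd {n : ℕ} (hn : n ≠ 0) (s : ℂ) :
    LSeriesHasSum (fun d => if d ∣ n then 1 else 0) s (sigmaC (-s) n) := by
  have hsupp : ∀ d ∉ n.divisors, LSeries.term (fun d => if d ∣ n then 1 else 0) s d = 0 := by
    intro d hd
    rcases eq_or_ne d 0 with rfl | hd0
    · exact LSeries.term_zero _ _
    · rw [LSeries.term_of_ne_zero hd0, if_neg fun h => hd (Nat.mem_divisors.mpr ⟨h, hn⟩),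
        zero_div]
  have hsum :
      sigmaC (-s) n = ∑ d ∈ n.divisors, LSeries.term (fun d => if d ∣ n then 1 else 0) s d :=
    Finset.sum_congr rfl fun d hd => by
      rw [LSeries.term_of_ne_zero (Nat.pos_of_mem_divisors hd).ne',
        if_pos (Nat.dvd_of_mem_divisors hd), Complex.cpow_neg, one_div]
  rw [hsum]
  exact hasSum_sum_of_ne_finset_zero hsupp

lemma LSeriesSummable_totient {s : ℂ} (hs : 2 < s.re) : LSeriesSummable (fun n => (φ n : ℂ)) s :=
  LSeriesSummable_of_le_const_mul_rpow (x := 2) hs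
    ⟨1, fun n _ => by
      rw [one_mul, show (2 : ℝ) - 1 = 1 by norm_num, Real.rpow_one, Complex.norm_natCast]
      exact_mod_cast Nat.totient_le n⟩

lemma LSeries.convolution_totient_one : (fun n => (φ n : ℂ)) ⍟ 1 = fun n : ℕ => (n : ℂ) := by
  ext n
  simp only [LSeries.convolution_def, Pi.one_apply, mul_one]
  rw [Nat.sum_divisorsAntidiagonal fun d _ => (φ d : ℂ)]
  exact_mod_cast Nat.sum_totient n

lemma LSeriesHasSum_totient {s : ℂ} (hs : 1 < s.re) :
    LSeriesHasSum (fun n => (φ n : ℂ)) (1 + s) (riemannZeta s / riemannZeta (1 + s)) := by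
  have hs' : 1 < (1 + s).re := by rw [Complex.add_re, Complex.one_re]; linarith
  have hφ := (LSeriesSummable_totient
    (by rw [Complex.add_re, Complex.one_re]; linarith : 2 < (1 + s).re)).LSeriesHasSum
  have hconv := hφ.convolution (LSeriesHasSum_one hs')
  rw [LSeries.convolution_totient_one] at hconv
  have hid : LSeriesHasSum (fun n => (n : ℂ)) (1 + s) (riemannZeta s) := by
    simpa using (LSeriesHasSum_one hs).natCast_mul
  rwa [hid.unique hconv, mul_div_cancel_right₀ _ (riemannZeta_ne_zero_of_one_lt_re hs')]

theorem natCast_card_mul_sub_dvd_eq_convolution {q : ℕ} (hq : q ≠ 0) (n : ℕ) :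
    (#{p ∈ Icc 1 q ×ˢ Icc 1 q | (q : ℤ) ∣ (p.1 : ℤ) * p.2 - n} : ℂ) =
      ((fun d => (d : ℂ) * if d ∣ n then 1 else 0) ⍟ fun d => (φ d : ℂ)) q := by
  simp only [card_mul_sub_dvd_eq_sum_divisors hq, LSeries.convolution_def]
  rw [Nat.sum_divisorsAntidiagonal fun d e => ((d : ℂ) * if d ∣ n then 1 else 0) * φ e]
  push_cast
  simp only [mul_ite, ite_mul, mul_one, zero_mul, mul_zero]

theorem count_pairs_dirichlet_series (l : ℕ) (hl : 0 < l) (s : ℂ) (hs : 1 < s.re) :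
    ∑' q : ℕ, ((q + 1 : ℕ) : ℂ) ^ (-(1 + s)) *
        ((((Finset.Icc 1 (q + 1)) ×ˢ (Finset.Icc 1 (q + 1))).filter
          (fun p => ((q + 1 : ℕ) : ℤ) ∣ ((p.1 : ℤ) * (p.2 : ℤ) - (l : ℤ) ^ 2))).card : ℂ)
      = sigmaC (-s) (l ^ 2) * riemannZeta s / riemannZeta (1 + s) := by
  have hsum := (LSeriesHasSum_indicator_dvd (pow_ne_zero 2 hl.ne') s).natCast_mul.convolution
    (LSeriesHasSum_totient hs)
  have hshift := (hasSum_nat_add_iff' 1).mpr hsum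
  simp only [range_one, sum_singleton, LSeries.term_zero, sub_zero] at hshift
  rw [mul_div_assoc, ← hshift.tsum_eq]
  refine tsum_congr fun q => ?_
  rw [LSeries.term_of_ne_zero q.add_one_ne_zero, ← natCast_card_mul_sub_dvd_eq_convolution
    q.add_one_ne_zero, Complex.cpow_neg, div_eq_inv_mul]
  simp only [Nat.cast_pow]
end

section
/- For every positive integer q, every integer n and every integer l, one has ρ_q(n² − 4l²) = (1/q) · Σ_{c=1}^{q} e(c·n/q) · S(c,c,l²;q). -/
/-- `ρ_q(n) = #{x (mod 2q) : x² ≡ n (mod 4q)}`. -/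
def rho (q : ℕ) (n : ℤ) : ℕ :=
  ((Finset.range (2 * q)).filter (fun x : ℕ => ((4 * q : ℕ) : ℤ) ∣ ((x : ℤ) ^ 2 - n))).card

/-! Both sides count the roots of `a² + n a + l²` in `ℤ/qℤ`. On the right, `δ_q(ab − c)` collapses
the sum over `c` to `Σ_{a,b} e(b (a² + n a + l²) / q)`, and orthogonality of the additive
characters of `ℤ/qℤ` evaluates the sum over `b`. On the left, `x² ≡ n² − 4l² (mod 4)` forces
`x ≡ n (mod 2)`, and writing `x = 2a + n` turns `x² ≡ n² − 4l² (mod 4q)` into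
`a² + n a + l² ≡ 0 (mod q)`, with `x mod 2q` corresponding to `a mod q`. -/

open Finset

section KloostermanSum

variable {R S : Type*} [CommRing R] [Fintype R] [DecidableEq R] [CommRing S]

def kloostermanSum (ψ : AddChar R S) (m n₁ n₂ : R) : S :=
  ∑ a, ∑ b, if a * b = m then ψ (a * n₁ + b * n₂) else 0

theorem sum_mul_kloostermanSum_diag [IsDomain S] {ψ : AddChar R S} (hψ : ψ.IsPrimitive)
    (n k : R) :
    ∑ c, ψ (c * n) * kloostermanSum ψ c c k
      = Fintype.card R * #{a | a ^ 2 + n * a + k = 0} := by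
  calc ∑ c, ψ (c * n) * kloostermanSum ψ c c k
      = ∑ a, ∑ b, ψ (b * (a ^ 2 + n * a + k)) := by
        simp only [kloostermanSum, mul_sum, mul_ite, mul_zero]
        rw [sum_comm]
        refine sum_congr rfl fun a _ => ?_
        rw [sum_comm]
        refine sum_congr rfl fun b _ => ?_
        rw [sum_ite_eq, if_pos (mem_univ _), ← AddChar.map_add_eq_mul]
        ring_nf
    _ = ∑ a, if a ^ 2 + n * a + k = 0 then (Fintype.card R : S) else 0 :=
        sum_congr rfl fun a _ => by rw [AddChar.sum_mulShift _ hψ, Nat.cast_ite, Nat.cast_zero]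
    _ = Fintype.card R * #{a | a ^ 2 + n * a + k = 0} := by
        rw [sum_ite, sum_const_zero, add_zero, sum_const, nsmul_eq_mul, mul_comm]

end KloostermanSum

section ZModTransfer

variable {q : ℕ} [NeZero q]

theorem sum_Icc_one_natCast_eq_sum_zmod {M : Type*} [AddCommMonoid M] (f : ZMod q → M) :
    ∑ a ∈ Icc 1 q, f a = ∑ x, f x := by
  refine sum_nbij' (fun a => a) (fun x => (x - 1).val + 1) (by simp) ?_ ?_ ?_ (by simp)
  · intro x _
    simpa [Nat.add_one_le_iff] using ZMod.val_lt (x - 1)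
  · intro a ha
    obtain ⟨ha1, haq⟩ := mem_Icc.mp (mem_coe.mp ha)
    rw [← Nat.cast_one, ← Nat.cast_sub ha1, ZMod.val_cast_of_lt (by omega)]
    omega
  · intro x _
    simp

theorem e_intCast_div (k : ℤ) : e (k / q) = ZMod.stdAddChar (k : ZMod q) := by
  rw [ZMod.stdAddChar_coe, e]
  push_cast
  ring_nf

theorem Kl_eq_kloostermanSum (m n₁ n₂ : ℤ) :
    Kl m n₁ n₂ q = kloostermanSum ZMod.stdAddChar (m : ZMod q) n₁ n₂ := by
  rw [Kl, kloostermanSum, ← sum_Icc_one_natCast_eq_sum_zmod]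
  refine sum_congr rfl fun a _ => ?_
  rw [← sum_Icc_one_natCast_eq_sum_zmod]
  refine sum_congr rfl fun b _ => ?_
  have hdvd : (q : ℤ) ∣ (a : ℤ) * b - m ↔ (a : ZMod q) * b = m := by
    rw [← ZMod.intCast_zmod_eq_zero_iff_dvd]
    push_cast
    exact sub_eq_zero
  have harg : ((a : ℝ) * n₁ + b * n₂) / q = (((a * n₁ + b * n₂ : ℤ) : ℝ)) / q := by
    push_cast; rfl
  simp only [hdvd, harg, e_intCast_div, ite_mul, one_mul, zero_mul]
  push_cast
  rfl

theorem sum_e_mul_Kl_eq_sum_zmod (n k : ℤ) :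
    ∑ c ∈ Icc 1 q, e ((c : ℝ) * n / q) * Kl c c k q
      = ∑ c : ZMod q,
          ZMod.stdAddChar (c * (n : ZMod q)) * kloostermanSum ZMod.stdAddChar c c (k : ZMod q) := by
  rw [← sum_Icc_one_natCast_eq_sum_zmod]
  refine sum_congr rfl fun c _ => ?_
  have harg : (c : ℝ) * n / q = (((c * n : ℤ) : ℝ)) / q := by push_cast; rfl
  rw [harg, e_intCast_div, Kl_eq_kloostermanSum]
  push_cast
  rfl

end ZModTransfer

theorem four_mul_dvd_sq_sub_iff {q n k : ℤ} (a : ℤ) :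
    4 * q ∣ (2 * a + n) ^ 2 - (n ^ 2 - 4 * k) ↔ q ∣ a ^ 2 + n * a + k := by
  rw [show (2 * a + n) ^ 2 - (n ^ 2 - 4 * k) = 4 * (a ^ 2 + n * a + k) by ring]
  exact mul_dvd_mul_iff_left four_ne_zero

theorem four_mul_dvd_sq_sub_iff_exists {q n k : ℤ} (x : ℤ) :
    4 * q ∣ x ^ 2 - (n ^ 2 - 4 * k) ↔ ∃ a, x = 2 * a + n ∧ q ∣ a ^ 2 + n * a + k := by
  refine ⟨fun h => ?_, fun ⟨a, hx, ha⟩ => hx ▸ (four_mul_dvd_sq_sub_iff a).mpr ha⟩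
  have hpar : Even (x - n) := by
    have h2 : (2 : ℤ) ∣ x ^ 2 - n ^ 2 := by
      rw [show x ^ 2 - n ^ 2 = x ^ 2 - (n ^ 2 - 4 * k) - 2 * (2 * k) by ring]
      exact dvd_sub ((dvd_mul_of_dvd_left (by norm_num) _).trans h) (dvd_mul_right _ _)
    simpa [Int.even_sub, Int.even_pow, ← even_iff_two_dvd] using h2
  obtain ⟨a, ha⟩ := hpar
  exact ⟨a, by omega, (four_mul_dvd_sq_sub_iff a).mp (by rwa [show x = 2 * a + n by omega] at h)⟩

theorem intCast_sq_add_mul_add_eq_zero_iff {q : ℕ} {n k : ℤ} (a : ℤ) :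
    (a : ZMod q) ^ 2 + n * a + k = 0 ↔ (q : ℤ) ∣ a ^ 2 + n * a + k := by
  rw [← ZMod.intCast_zmod_eq_zero_iff_dvd]
  push_cast
  rfl

theorem exists_emod_two_mul_eq (m u n : ℤ) :
    ∃ a, (2 * u + n) % (2 * m) = 2 * a + n ∧ a ≡ u [ZMOD m] :=
  ⟨u - m * ((2 * u + n) / (2 * m)), by rw [Int.emod_def]; ring,
    Int.modEq_iff_dvd.mpr ⟨(2 * u + n) / (2 * m), by ring⟩⟩

theorem rho_sq_sub_four_mul {q : ℕ} [NeZero q] (n k : ℤ) :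
    rho q (n ^ 2 - 4 * k) = #{a : ZMod q | a ^ 2 + n * a + k = 0} := by
  have h2q : (0 : ℤ) < 2 * q := by have := NeZero.pos q; omega
  have hmem (x : ℕ) : x ∈ (range (2 * q)).filter
      (fun x : ℕ => ((4 * q : ℕ) : ℤ) ∣ ((x : ℤ) ^ 2 - (n ^ 2 - 4 * k))) ↔
      (x : ℤ) < 2 * q ∧ ∃ a, (x : ℤ) = 2 * a + n ∧ (q : ℤ) ∣ a ^ 2 + n * a + k := by
    rw [mem_filter, mem_range, ← four_mul_dvd_sq_sub_iff_exists]
    push_cast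
    omega
  have hj (a : ZMod q) : ((((2 * (a.val : ℤ) + n) % (2 * q)).toNat : ℕ) : ℤ)
      = (2 * (a.val : ℤ) + n) % (2 * q) := Int.toNat_of_nonneg (Int.emod_nonneg _ h2q.ne')
  unfold rho
  -- `x ↦ (x - n) / 2 mod q` and `a ↦ 2a + n mod 2q` are inverse bijections.
  refine card_nbij' (fun x => ((((x : ℤ) - n) / 2 : ℤ) : ZMod q))
    (fun a => ((2 * (a.val : ℤ) + n) % (2 * q)).toNat) ?_ ?_ ?_ ?_
  · intro x hx
    obtain ⟨-, a, hxa, ha⟩ := (hmem x).mp hx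
    simpa [hxa, intCast_sq_add_mul_add_eq_zero_iff] using ha
  · intro a ha
    obtain ⟨b, hb, hba⟩ := exists_emod_two_mul_eq q a.val n
    refine (hmem _).mpr ⟨by rw [hj]; exact Int.emod_lt_of_pos _ h2q, b, by rw [hj, hb], ?_⟩
    rw [← intCast_sq_add_mul_add_eq_zero_iff, (ZMod.intCast_eq_intCast_iff _ _ _).mpr hba]
    simpa using ha
  · intro x hx
    obtain ⟨hx2q, a, hxa, -⟩ := (hmem x).mp hx
    have hval : ((((x : ℤ) - n) / 2 : ℤ) : ZMod q).val ≡ a [ZMOD q] := by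
      rw [hxa, show 2 * a + n - n = 2 * a by ring, Int.mul_ediv_cancel_left _ two_ne_zero,
        ZMod.val_intCast]
      exact Int.mod_modEq a q
    have := ((hval.mul_left' (c := 2)).add_right n).eq
    zify
    rw [hj, this, ← hxa, Int.emod_eq_of_lt (by omega) hx2q]
  · intro a _
    obtain ⟨b, hb, hba⟩ := exists_emod_two_mul_eq q a.val n
    dsimp only
    rw [hj, hb, show 2 * b + n - n = 2 * b by ring, Int.mul_ediv_cancel_left _ two_ne_zero,
      (ZMod.intCast_eq_intCast_iff _ _ _).mpr hba]
    simp

theorem rho_eq_kloosterman_sum (q : ℕ) (hq : 0 < q) (n l : ℤ) :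
    (rho q (n ^ 2 - 4 * l ^ 2) : ℂ)
      = (1 / (q : ℂ)) * ∑ c ∈ Finset.Icc 1 q,
          e ((c : ℝ) * (n : ℝ) / q) * Kl (c : ℤ) (c : ℤ) (l ^ 2) q := by
  have : NeZero q := ⟨hq.ne'⟩
  rw [sum_e_mul_Kl_eq_sum_zmod, sum_mul_kloostermanSum_diag (ZMod.isPrimitive_stdAddChar q),
    ZMod.card, rho_sq_sub_four_mul, one_div, inv_mul_cancel_left₀ (by exact_mod_cast hq.ne')]
end

section
/- Let t : ℕ≥1 → ℂ satisfy the Hecke multiplicativity relation t(n)·t(m) = Σ_{d | gcd(n,m)} t(n·m/d²) for all positive integers n, m, and let s be a complex number with Re(s) > 1 such that Σ_{n=1}^{∞} |t(n)|·n^{−Re(s)} < ∞ and Σ_{n=1}^{∞} |t(n²)|·n^{−Re(s)} < ∞. Then Σ_{n=1}^{∞} t(n)²/n^{s} = ζ(s) · Σ_{n=1}^{∞} t(n²)/n^{s}, where ζ is the Riemann zeta function. -/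
open scoped LSeries.notation

theorem hecke_square_series (t : ℕ → ℂ)
    (hmul : ∀ n m : ℕ, 0 < n → 0 < m →
      t n * t m = ∑ d ∈ (Nat.gcd n m).divisors, t (n * m / d ^ 2))
    (s : ℂ) (hs : 1 < s.re)
    (h1 : Summable (fun n : ℕ => ‖t (n + 1)‖ / ((n + 1 : ℝ)) ^ s.re))
    (h2 : Summable (fun n : ℕ => ‖t ((n + 1) ^ 2)‖ / ((n + 1 : ℝ)) ^ s.re)) :
    ∑' n : ℕ, t (n + 1) ^ 2 / ((n + 1 : ℕ) : ℂ) ^ s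
      = riemannZeta s * ∑' n : ℕ, t ((n + 1) ^ 2) / ((n + 1 : ℕ) : ℂ) ^ s := by
  set g : ℕ → ℂ := fun n => t (n ^ 2) with hg
  -- key coefficient identity
  have key : ∀ n : ℕ, n ≠ 0 → ((1 : ℕ → ℂ) ⍟ g) n = t n ^ 2 := by
    intro n hn
    have hpos : 0 < n := Nat.pos_of_ne_zero hn
    rw [LSeries.convolution_def]
    simp only [Pi.one_apply, one_mul]
    rw [Nat.sum_divisorsAntidiagonal (fun _ j => g j), sq, hmul n n hpos hpos,
      Nat.gcd_self]
    refine Finset.sum_congr rfl fun d hd => ?_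
    have hdn : d ∣ n := Nat.dvd_of_mem_divisors hd
    have hd0 : 0 < d := Nat.pos_of_mem_divisors hd
    obtain ⟨k, rfl⟩ := hdn
    have h1 : d * k * (d * k) / d ^ 2 = k ^ 2 := by
      have : d * k * (d * k) = d ^ 2 * k ^ 2 := by ring
      rw [this, Nat.mul_div_cancel_left _ (pow_pos hd0 2)]
    have h2 : d * k / d = k := Nat.mul_div_cancel_left _ hd0
    rw [h1, h2]
  -- summability of g
  have hgS : LSeriesSummable g s := by
    have : Summable fun n : ℕ => ‖LSeries.term g s n‖ := by
      rw [← summable_nat_add_iff 1]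
      refine h2.congr fun n => ?_
      rw [LSeries.norm_term_eq]
      simp [hg]
    exact this.of_norm
  have h1S : LSeriesSummable (1 : ℕ → ℂ) s := LSeriesSummable_one_iff.mpr hs
  -- rewrite LHS as LSeries of convolution
  have hLHS : ∑' n : ℕ, t (n + 1) ^ 2 / ((n + 1 : ℕ) : ℂ) ^ s
      = LSeries ((1 : ℕ → ℂ) ⍟ g) s := by
    rw [LSeries]
    rw [← Function.Injective.tsum_eq (g := fun n : ℕ => n + 1)
      (f := LSeries.term ((1 : ℕ → ℂ) ⍟ g) s) (add_left_injective 1)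
      (by
        intro x hx
        rcases Nat.eq_zero_or_pos x with rfl | hxpos
        · simp [Function.mem_support, LSeries.term] at hx
        · exact ⟨x - 1, by simp; omega⟩)]
    refine tsum_congr fun n => ?_
    rw [LSeries.term_of_ne_zero (Nat.succ_ne_zero n), key (n + 1) (Nat.succ_ne_zero n)]
  -- rewrite RHS tsum as LSeries g
  have hRHS : ∑' n : ℕ, t ((n + 1) ^ 2) / ((n + 1 : ℕ) : ℂ) ^ s = LSeries g s := by
    rw [LSeries]
    rw [← Function.Injective.tsum_eq (g := fun n : ℕ => n + 1)
      (f := LSeries.term g s) (add_left_injective 1)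
      (by
        intro x hx
        rcases Nat.eq_zero_or_pos x with rfl | hxpos
        · simp [Function.mem_support, LSeries.term] at hx
        · exact ⟨x - 1, by simp; omega⟩)]
    exact tsum_congr fun n => (LSeries.term_of_ne_zero (Nat.succ_ne_zero n) g s).symm
  rw [hLHS, hRHS, LSeries_convolution' h1S hgS, LSeries_one_eq_riemannZeta hs]
end

section
/- (First derivative test) Let a < b be real numbers and let f, g : [a,b] → ℝ be continuously differentiable with f′(x) ≠ 0 for all x ∈ [a,b], and suppose the function x ↦ g(x)/f′(x) is monotone on [a,b]. Then |∫_a^b g(x)·exp(i·f(x)) dx| ≤ 4 · max_{x ∈ [a,b]} |g(x)/f′(x)|. -/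
/-!
With `h = g / f'` and `F = -i e^{if}` we have `g e^{if} = h F'` and `‖F‖ = 1`. A continuous
monotone `h` need not be differentiable, but it is the distribution function of a Stieltjes
measure `dh`, and Fubini gives the integration by parts formula
`∫ h F' = h(b) F(b) - h(a) F(a) - ∫ F dh`. The three terms are bounded by `|h b|`, `|h a|` and
the total mass `|h b - h a|` of `dh`, hence by `4 max |h|` altogether.
-/

open Set MeasureTheory

namespace StieltjesFunction

variable {E : Type*} [NormedAddCommGroup E] [NormedSpace ℝ E] [CompleteSpace E]
  (S : StieltjesFunction ℝ) {a b : ℝ}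

instance isFiniteMeasure_restrict_Ioc : IsFiniteMeasure (S.measure.restrict (Ioc a b)) :=
  isFiniteMeasure_restrict.2 measure_Ioc_lt_top.ne

theorem measureReal_Ioc {x y : ℝ} (h : x ≤ y) : S.measure.real (Ioc x y) = S y - S x := by
  rw [measureReal_def, S.measure_Ioc, ENNReal.toReal_ofReal (sub_nonneg.2 (S.mono h))]

theorem setIntegral_sub_smul_eq_setIntegral_setIntegral {φ : ℝ → E}
    (hφ : IntegrableOn φ (Ioc a b)) :
    ∫ x in Ioc a b, (S x - S a) • φ x = ∫ t in Ioc a b, (∫ x in Ioc t b, φ x) ∂S.measure := by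
  -- both sides integrate `φ x` over `{(x, t) | a < t ≤ x ≤ b}` against `dx dS(t)`
  set K : ℝ → ℝ → E := fun x t => {p : ℝ × ℝ | p.2 ≤ p.1}.indicator (fun p => φ p.1) (x, t)
  have hK : Integrable (Function.uncurry K) ((volume.restrict (Ioc a b)).prod
      (S.measure.restrict (Ioc a b))) :=
    (hφ.comp_fst _).indicator (measurableSet_le measurable_snd measurable_fst)
  calc ∫ x in Ioc a b, (S x - S a) • φ x
      = ∫ x in Ioc a b, ∫ t in Ioc a b, K x t ∂S.measure := by
        refine setIntegral_congr_fun measurableSet_Ioc fun x hx => ?_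
        have hKx : K x = (Iic x).indicator fun _ => φ x := by
          ext t; simp [K, indicator]
        have hIoc : Iic x ∩ Ioc a b = Ioc a x := by
          ext t; simp only [mem_inter_iff, mem_Iic, mem_Ioc]; constructor <;> grind
        rw [hKx, integral_indicator_const _ measurableSet_Iic,
          measureReal_restrict_apply measurableSet_Iic, hIoc, S.measureReal_Ioc hx.1.le]
    _ = ∫ t in Ioc a b, (∫ x in Ioc a b, K x t) ∂S.measure := integral_integral_swap hK
    _ = ∫ t in Ioc a b, (∫ x in Ioc t b, φ x) ∂S.measure := by
        refine setIntegral_congr_fun measurableSet_Ioc fun t ht => ?_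
        have hKt : (fun x => K x t) = (Ici t).indicator φ := by
          ext x; simp [K, indicator]
        have hIcc : Ioc a b ∩ Ici t = Icc t b := by
          ext x; simp only [mem_inter_iff, mem_Ioc, mem_Ici, mem_Icc]; constructor <;> grind
        simp only [hKt, setIntegral_indicator measurableSet_Ici, hIcc,
          integral_Icc_eq_integral_Ioc]

theorem intervalIntegral_smul_deriv_eq_sub_integral {F F' : ℝ → E} (hab : a ≤ b)
    (hFc : ContinuousOn F (Icc a b)) (hF : ∀ x ∈ Ioo a b, HasDerivAt F (F' x) x)
    (hF' : IntegrableOn F' (Icc a b)) :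
    ∫ x in a..b, S x • F' x = S b • F b - S a • F a - ∫ t in Ioc a b, F t ∂S.measure := by
  have ftc : ∀ t ∈ Icc a b, ∫ x in Ioc t b, F' x = F b - F t := fun t ht => by
    rw [← intervalIntegral.integral_of_le ht.2]
    exact intervalIntegral.integral_eq_sub_of_hasDerivAt_of_le ht.2
      (hFc.mono (Icc_subset_Icc_left ht.1)) (fun x hx => hF x (Ioo_subset_Ioo_left ht.1 hx))
      ((intervalIntegrable_iff_integrableOn_Icc_of_le ht.2).2
        (hF'.mono_set (Icc_subset_Icc_left ht.1)))
  have hF'Ioc : IntegrableOn F' (Ioc a b) := hF'.mono_set Ioc_subset_Icc_self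
  have hFint : IntegrableOn F (Ioc a b) S.measure :=
    (hFc.integrableOn_compact isCompact_Icc).mono_set Ioc_subset_Icc_self
  calc ∫ x in a..b, S x • F' x
      = (∫ x in Ioc a b, (S x - S a) • F' x) + S a • ∫ x in Ioc a b, F' x := by
        have hSF' : IntegrableOn (fun x => S x • F' x) (Ioc a b) :=
          hF'Ioc.bdd_smul (max |S a| |S b|) S.mono.measurable.aestronglyMeasurable
            (ae_restrict_of_forall_mem measurableSet_Ioc fun x hx =>
              abs_le_max_abs_abs (S.mono hx.1.le) (S.mono hx.2))
        have hSaF' : IntegrableOn (fun x => S a • F' x) (Ioc a b) := hF'Ioc.smul _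
        simp_rw [sub_smul]
        rw [intervalIntegral.integral_of_le hab, integral_sub hSF' hSaF',
          integral_smul, sub_add_cancel]
    _ = (∫ t in Ioc a b, (F b - F t) ∂S.measure) + S a • (F b - F a) := by
        rw [S.setIntegral_sub_smul_eq_setIntegral_setIntegral hF'Ioc, ftc a ⟨le_rfl, hab⟩,
          setIntegral_congr_fun measurableSet_Ioc fun t ht => ftc t (Ioc_subset_Icc_self ht)]
    _ = S b • F b - S a • F a - ∫ t in Ioc a b, F t ∂S.measure := by
        rw [integral_sub (integrable_const _) hFint, setIntegral_const, S.measureReal_Ioc hab]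
        module

end StieltjesFunction

theorem MonotoneOn.exists_stieltjesFunction_eqOn {a b : ℝ} {h : ℝ → ℝ} (hab : a ≤ b)
    (hm : MonotoneOn h (Icc a b)) (hc : ContinuousOn h (Icc a b)) :
    ∃ S : StieltjesFunction ℝ, EqOn S h (Icc a b) := by
  have hcont : Continuous (IccExtend hab ((Icc a b).domRestrict h)) :=
    continuous_IccExtend_iff.2 hc.domRestrict
  exact ⟨⟨_, (monotoneOn_iff_monotone.1 hm).IccExtend hab, fun x => hcont.continuousWithinAt⟩,
    fun x hx => IccExtend_of_mem hab ((Icc a b).domRestrict h) hx⟩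

theorem norm_intervalIntegral_smul_deriv_le {E : Type*} [NormedAddCommGroup E]
    [NormedSpace ℝ E] [CompleteSpace E] {a b C : ℝ} {h : ℝ → ℝ} {F F' : ℝ → E} (hab : a ≤ b)
    (hmono : MonotoneOn h (Icc a b) ∨ AntitoneOn h (Icc a b)) (hc : ContinuousOn h (Icc a b))
    (hFc : ContinuousOn F (Icc a b)) (hF : ∀ x ∈ Ioo a b, HasDerivAt F (F' x) x)
    (hF' : IntegrableOn F' (Icc a b)) (hFC : ∀ x ∈ Icc a b, ‖F x‖ ≤ C) :
    ‖∫ x in a..b, h x • F' x‖ ≤ 2 * C * (|h a| + |h b|) := by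
  wlog hm : MonotoneOn h (Icc a b) generalizing h
  · have := this (hmono.symm.imp AntitoneOn.neg MonotoneOn.neg) hc.neg
      (hmono.resolve_left hm).neg
    simpa only [Pi.neg_apply, neg_smul, intervalIntegral.integral_neg, norm_neg, abs_neg]
      using this
  obtain ⟨S, hS⟩ := hm.exists_stieltjesFunction_eqOn hab hc
  have ha : a ∈ Icc a b := left_mem_Icc.2 hab
  have hb : b ∈ Icc a b := right_mem_Icc.2 hab
  have hC : 0 ≤ C := (norm_nonneg _).trans (hFC a ha)
  have hmass : ‖∫ t in Ioc a b, F t ∂S.measure‖ ≤ C * (h b - h a) := by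
    rw [← hS ha, ← hS hb, ← S.measureReal_Ioc hab]
    exact norm_setIntegral_le_of_norm_le_const measure_Ioc_lt_top
      fun t ht => hFC t (Ioc_subset_Icc_self ht)
  have hcongr : ∫ x in a..b, h x • F' x = ∫ x in a..b, S x • F' x :=
    intervalIntegral.integral_congr fun x hx => by rw [hS (uIcc_of_le hab ▸ hx)]
  rw [hcongr, S.intervalIntegral_smul_deriv_eq_sub_integral hab hFc hF hF', hS ha, hS hb]
  calc ‖h b • F b - h a • F a - ∫ t in Ioc a b, F t ∂S.measure‖
      ≤ ‖h b • F b‖ + ‖h a • F a‖ + ‖∫ t in Ioc a b, F t ∂S.measure‖ :=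
        (norm_sub_le _ _).trans (add_le_add_left (norm_sub_le _ _) _)
    _ ≤ |h b| * C + |h a| * C + C * (|h b| + |h a|) := by
        rw [norm_smul, norm_smul, Real.norm_eq_abs, Real.norm_eq_abs]
        gcongr
        · exact hFC b hb
        · exact hFC a ha
        · exact hmass.trans (by gcongr; linarith [le_abs_self (h b), neg_abs_le (h a)])
    _ = 2 * C * (|h a| + |h b|) := by ring

theorem first_derivative_test_general (a b : ℝ) (hab : a < b) (f g f' g' : ℝ → ℝ)
    (hf : ∀ x ∈ Set.Icc a b, HasDerivWithinAt f (f' x) (Set.Icc a b) x)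
    (hg : ∀ x ∈ Set.Icc a b, HasDerivWithinAt g (g' x) (Set.Icc a b) x)
    (hf'c : ContinuousOn f' (Set.Icc a b))
    (hf'ne : ∀ x ∈ Set.Icc a b, f' x ≠ 0)
    (hmono : MonotoneOn (fun x => g x / f' x) (Set.Icc a b) ∨
             AntitoneOn (fun x => g x / f' x) (Set.Icc a b)) :
    ‖∫ x in a..b, (g x : ℂ) * Complex.exp (Complex.I * (f x : ℂ))‖
      ≤ 4 * sSup ((fun x => |g x / f' x|) '' Set.Icc a b) := by
  set F : ℝ → ℂ := fun x => -Complex.I * Complex.exp (Complex.I * f x)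
  set F' : ℝ → ℂ := fun x => f' x * Complex.exp (Complex.I * f x)
  have hfc : ContinuousOn f (Icc a b) := fun x hx => (hf x hx).continuousWithinAt
  have hc : ContinuousOn (fun x => g x / f' x) (Icc a b) :=
    ContinuousOn.div (fun x hx => (hg x hx).continuousWithinAt) hf'c hf'ne
  have hF : ∀ x ∈ Ioo a b, HasDerivAt F (F' x) x := fun x hx => by
    have hfx := (hf x (Ioo_subset_Icc_self hx)).hasDerivAt (Icc_mem_nhds hx.1 hx.2)
    refine (hfx.ofReal_comp.const_mul Complex.I |>.cexp |>.const_mul (-Complex.I)).congr_deriv ?_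
    linear_combination -(F' x) * Complex.I_mul_I
  have hFC : ∀ x ∈ Icc a b, ‖F x‖ ≤ 1 := fun x _ => by simp [F, Complex.norm_exp]
  have hintegrand : ∫ x in a..b, (g x : ℂ) * Complex.exp (Complex.I * f x) =
      ∫ x in a..b, (g x / f' x) • F' x := intervalIntegral.integral_congr fun x hx => by
    have : (f' x : ℂ) ≠ 0 := Complex.ofReal_ne_zero.2 (hf'ne x (uIcc_of_le hab.le ▸ hx))
    simp only [F', Complex.real_smul, Complex.ofReal_div]
    field_simp
  have hsup : ∀ x ∈ Icc a b, |g x / f' x| ≤ sSup ((fun x => |g x / f' x|) '' Icc a b) :=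
    fun x hx => le_csSup (isCompact_Icc.image_of_continuousOn hc.abs).bddAbove ⟨x, hx, rfl⟩
  rw [hintegrand]
  refine (norm_intervalIntegral_smul_deriv_le hab.le hmono hc (by fun_prop) hF
    (ContinuousOn.integrableOn_Icc (by fun_prop)) hFC).trans ?_
  linarith [hsup a (left_mem_Icc.2 hab.le), hsup b (right_mem_Icc.2 hab.le)]

/-- The first derivative test for oscillatory integrals. -/
theorem first_derivative_test (a b : ℝ) (hab : a < b) (f g f' g' : ℝ → ℝ)
    (hf : ∀ x ∈ Set.Icc a b, HasDerivWithinAt f (f' x) (Set.Icc a b) x)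
    (hg : ∀ x ∈ Set.Icc a b, HasDerivWithinAt g (g' x) (Set.Icc a b) x)
    (hf'c : ContinuousOn f' (Set.Icc a b))
    (hg'c : ContinuousOn g' (Set.Icc a b))
    (hf'ne : ∀ x ∈ Set.Icc a b, f' x ≠ 0)
    (hmono : MonotoneOn (fun x => g x / f' x) (Set.Icc a b) ∨
             AntitoneOn (fun x => g x / f' x) (Set.Icc a b)) :
    ‖∫ x in a..b, (g x : ℂ) * Complex.exp (Complex.I * (f x : ℂ))‖
      ≤ 4 * sSup ((fun x => |g x / f' x|) '' Set.Icc a b) :=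
  first_derivative_test_general a b hab f g f' g' hf hg hf'c hf'ne hmono
end

section
/- Let m, n₁ be positive integers, n₂ an integer, and φ : (0,∞) → ℂ a function such that Σ_{d | gcd(m,n₁)} Σ_{q=1}^{∞} |S(1, m·n₁/d², n₂; q)| · |φ(4π√(m·n₁·n₂)/(q·d))| / q < ∞. Then Σ_{q=1}^{∞} (S(m,n₁,n₂;q)/q) · φ(4π√(m·n₁·n₂)/q) = Σ_{d | gcd(m,n₁)} Σ_{q=1}^{∞} (S(1, m·n₁/d², n₂; q)/q) · φ(4π√(m·n₁·n₂)/(q·d)), with both sides converging absolutely. -/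
open Finset

lemma e_add_intCast (x : ℝ) (n : ℤ) : e (x + n) = e x := by
  rw [e_add, e, e, Complex.ofReal_intCast, mul_comm _ (n : ℂ),
    Complex.exp_int_mul_two_pi_mul_I, mul_one]

lemma e_intCast_add_mul_div {q : ℕ} (hq : q ≠ 0) (x k : ℤ) :
    e (((x + q * k : ℤ) : ℝ) / q) = e (x / q) := by
  push_cast
  rw [add_div, mul_div_cancel_left₀ _ (by exact_mod_cast hq), e_add_intCast]

lemma e_intCast_div_eq_one_iff {q : ℕ} (hq : 0 < q) (n : ℤ) : e (n / q) = 1 ↔ (q : ℤ) ∣ n := by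
  have : NeZero q := ⟨hq.ne'⟩
  have : e (n / q) = ZMod.stdAddChar (n : ZMod q) := by
    rw [ZMod.stdAddChar_coe, e]
    push_cast
    ring_nf
  rw [this, ← AddChar.map_zero_eq_one (ZMod.stdAddChar (N := q)), ZMod.injective_stdAddChar.eq_iff,
    ZMod.intCast_zmod_eq_zero_iff_dvd]

namespace Function.Periodic

variable {M : Type*} [AddCommMonoid M] {f : ℤ → M} {q : ℕ}

lemma sum_Icc_one_eq_sum_range (hf : Periodic f q) :
    ∑ a ∈ Icc 1 q, f a = ∑ a ∈ range q, f a := by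
  rw [← Finset.Ico_add_one_right_eq_Icc, sum_Ico_eq_sum_range, Nat.add_sub_cancel]
  cases q with
  | zero => simp
  | succ q =>
    rw [sum_range_succ, sum_range_succ' (fun a : ℕ => f a), add_comm]
    simp [add_comm, ← hf.eq]

lemma sum_range_add_one (hf : Periodic f q) :
    ∑ a ∈ range q, f (a + 1) = ∑ a ∈ range q, f a := by
  cases q with
  | zero => simp
  | succ q =>
    rw [sum_range_succ (fun a : ℕ => f (a + 1)), sum_range_succ' (fun a : ℕ => f a)]
    push_cast
    rw [← hf.eq]
    push_cast
    rfl

lemma sum_range_add_nat (hf : Periodic f q) (c : ℕ) :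
    ∑ a ∈ range q, f (a + c) = ∑ a ∈ range q, f a := by
  induction c with
  | zero => simp
  | succ c ih =>
    rw [← ih, ← (hf.add_const (c : ℤ)).sum_range_add_one]
    simp only [Nat.cast_add, Nat.cast_one, add_assoc, add_comm (1 : ℤ)]

lemma sum_range_mul (hf : Periodic f q) (d : ℕ) :
    ∑ a ∈ range (d * q), f a = d • ∑ a ∈ range q, f a := by
  induction d with
  | zero => simp
  | succ d ih =>
    rw [Nat.succ_mul, sum_range_add, ih, succ_nsmul]
    congr 1
    refine sum_congr rfl fun a _ => ?_
    push_cast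
    rw [add_comm]
    exact (hf.nat_mul d) a

lemma sum_range_eq_zero_of_map_add_eq_mul {R : Type*} [Ring R] [NoZeroDivisors R] {f : ℤ → R}
    (hf : Periodic f q) {c : ℕ} {z : R} (hz : z ≠ 1) (hfc : ∀ a, f (a + c) = z * f a) :
    ∑ a ∈ range q, f a = 0 := by
  have h : z * ∑ a ∈ range q, f a = ∑ a ∈ range q, f a := by
    rw [mul_sum, ← hf.sum_range_add_nat c]
    simp only [hfc]
  have : (z - 1) * ∑ a ∈ range q, f a = 0 := by rw [sub_mul, h, one_mul, sub_self]
  exact (mul_eq_zero.1 this).resolve_left (sub_ne_zero.2 hz)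

lemma sum_range_ite_dvd_mul_sub (hf : Periodic f q) (hq : 0 < q) {β u : ℤ}
    (hu : (q : ℤ) ∣ β * u - 1) (c : ℤ) :
    ∑ α ∈ range q, (if (q : ℤ) ∣ α * β - c then f α else 0) = f (c * u) := by
  have hsol : ∀ α : ℤ, (q : ℤ) ∣ α * β - c ↔ α % q = c * u % q := by
    intro α
    rw [← Int.ModEq, ← ZMod.intCast_eq_intCast_iff, ← ZMod.intCast_zmod_eq_zero_iff_dvd]
    rw [← ZMod.intCast_zmod_eq_zero_iff_dvd] at hu
    push_cast at hu ⊢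
    constructor <;> intro h
    · linear_combination u * h - α * hu
    · linear_combination β * h + c * hu
  set r := (c * u % q).toNat
  have hr : (r : ℤ) = c * u % q := Int.toNat_of_nonneg (Int.emod_nonneg _ (by omega))
  have hr_mem : r ∈ range q := by
    rw [mem_range, ← Nat.cast_lt (α := ℤ), hr]
    exact Int.emod_lt_of_pos _ (by omega)
  have hcond : ∀ α ∈ range q, (q : ℤ) ∣ α * β - c ↔ α = r := by
    intro α hα
    rw [hsol, Int.emod_eq_of_lt (by omega) (by simpa using hα), ← hr, Nat.cast_inj]
  rw [sum_congr rfl fun α hα => if_congr (hcond α hα) rfl rfl, sum_ite_eq' _ _ _, if_pos hr_mem,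
    hr, Int.emod_def, mul_comm (q : ℤ)]
  exact hf.sub_int_mul_eq (c * u / q)

end Function.Periodic

lemma Nat.sum_range_eq_sum_divisors_sum_coprime {M : Type*} [AddCommMonoid M] {q : ℕ} (hq : q ≠ 0)
    (F : ℕ → M) :
    ∑ b ∈ range q, F b =
      ∑ d ∈ q.divisors, ∑ β ∈ range (q / d) with β.Coprime (q / d), F (d * β) := by
  rw [← sum_fiberwise_of_maps_to (g := fun b => q.gcd b) (t := q.divisors)
    fun b _ => Nat.mem_divisors.2 ⟨Nat.gcd_dvd_left _ _, hq⟩]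
  refine sum_congr rfl fun d hd => ?_
  obtain ⟨⟨k, rfl⟩, -⟩ := Nat.mem_divisors.1 hd
  have hd0 : 0 < d := Nat.pos_of_ne_zero (left_ne_zero_of_mul hq)
  rw [Nat.mul_div_cancel_left k hd0]
  symm
  apply Finset.sum_bij fun β _ => d * β
  · simp only [mem_filter, mem_range, and_imp, Nat.Coprime]
    refine fun a ha1 ha2 => ⟨by gcongr, ?_⟩
    rw [Nat.gcd_mul_left, Nat.gcd_comm, ha2, mul_one]
  · simp [hd0.ne']
  · simp only [mem_filter, mem_range, exists_prop, and_imp]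
    intro b hb1 hb2
    have : d ∣ b := by
      rw [← hb2]
      apply Nat.gcd_dvd_right
    rcases this with ⟨β, rfl⟩
    refine ⟨β, ⟨⟨(mul_lt_mul_iff_right₀ hd0).1 hb1, ?_⟩, rfl⟩⟩
    rw [Nat.gcd_mul_left, mul_eq_left₀ hd0.ne'] at hb2
    exact Nat.coprime_comm.1 hb2
  · simp

noncomputable def klSummand (q : ℕ) (m n₁ n₂ a b : ℤ) : ℂ :=
  if (q : ℤ) ∣ a * b - m then e ((a * n₁ + b * n₂ : ℤ) / q) else 0

section klSummand

variable {q : ℕ} {m n₁ n₂ : ℤ}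

lemma klSummand_periodic_left (hq : q ≠ 0) (b : ℤ) :
    Function.Periodic (fun a => klSummand q m n₁ n₂ a b) q := by
  intro a
  simp only [klSummand, show (a + q) * b - m = a * b - m + q * b by ring,
    dvd_add_left (dvd_mul_right (q : ℤ) b),
    show (a + q) * n₁ + b * n₂ = a * n₁ + b * n₂ + q * n₁ by ring, e_intCast_add_mul_div hq]

lemma klSummand_periodic_right (hq : q ≠ 0) (a : ℤ) :
    Function.Periodic (fun b => klSummand q m n₁ n₂ a b) q := by
  intro b
  simp only [klSummand, show a * (b + q) - m = a * b - m + q * a by ring,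
    dvd_add_left (dvd_mul_right (q : ℤ) a),
    show a * n₁ + (b + q) * n₂ = a * n₁ + b * n₂ + q * n₂ by ring, e_intCast_add_mul_div hq]

lemma Kl_eq_sum_range_sum_range :
    Kl m n₁ n₂ q = ∑ b ∈ range q, ∑ a ∈ range q, klSummand q m n₁ n₂ a b := by
  rcases eq_or_ne q 0 with rfl | hq
  · simp [Kl]
  rw [Kl, sum_comm]
  have hsummand : ∀ a b : ℕ, (if (q : ℤ) ∣ (a : ℤ) * (b : ℤ) - m then (1 : ℂ) else 0) *
      e (((a : ℝ) * (n₁ : ℝ) + (b : ℝ) * (n₂ : ℝ)) / q) = klSummand q m n₁ n₂ a b := by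
    intro a b
    rw [klSummand, ite_mul, one_mul, zero_mul]
    push_cast
    rfl
  simp only [hsummand]
  rw [sum_congr rfl fun (b : ℕ) _ => (klSummand_periodic_left hq (b : ℤ)).sum_Icc_one_eq_sum_range]
  refine Function.Periodic.sum_Icc_one_eq_sum_range
    (f := fun b => ∑ a ∈ range q, klSummand q m n₁ n₂ a b) fun b => ?_
  exact sum_congr rfl fun a _ => klSummand_periodic_right hq a b

lemma klSummand_mul {d : ℕ} (hd : d ≠ 0) (a b : ℤ) :
    klSummand (d * q) (d * m) (d * n₁) n₂ a (d * b) = klSummand q m n₁ n₂ a b := by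
  have hd' : (d : ℤ) ≠ 0 := by exact_mod_cast hd
  simp only [klSummand, Nat.cast_mul,
    show a * (d * b) - d * m = d * (a * b - m) by ring, mul_dvd_mul_iff_left hd']
  congr 2
  push_cast
  field_simp

lemma klSummand_add_mul {d : ℕ} (hd : d ≠ 0) (hq : q ≠ 0) (a b : ℤ) :
    klSummand (d * q) m n₁ n₂ (a + q) (d * b) =
      e (n₁ / d) * klSummand (d * q) m n₁ n₂ a (d * b) := by
  simp only [klSummand, Nat.cast_mul,
    show (a + q) * (d * b) - m = a * (d * b) - m + d * q * b by ring,
    dvd_add_left (dvd_mul_right ((d : ℤ) * q) b), mul_ite, mul_zero, ← e_add]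
  congr 2
  push_cast
  field_simp
  ring

lemma klSummand_eq_zero_of_not_dvd {d : ℕ} (hdm : ¬ (d : ℤ) ∣ m) (a b : ℤ) :
    klSummand (d * q) m n₁ n₂ a (d * b) = 0 := by
  refine if_neg fun h => hdm ?_
  have hd : (d : ℤ) ∣ a * (d * b) - m := (Dvd.intro _ (Nat.cast_mul d q).symm).trans h
  simpa using dvd_sub ((dvd_mul_right (d : ℤ) b).mul_left a) hd

-- Each side has a single nonzero term, at `a ≡ m b⁻¹` resp. `a ≡ b⁻¹`, and the phases agree.
lemma sum_klSummand_eq_of_isCoprime (hq : 0 < q) {b : ℤ} (hb : IsCoprime b q) :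
    ∑ a ∈ range q, klSummand q m n₁ n₂ a b = ∑ a ∈ range q, klSummand q 1 (m * n₁) n₂ a b := by
  obtain ⟨u, v, huv⟩ := hb
  have hu : (q : ℤ) ∣ b * u - 1 := ⟨-v, by linear_combination huv⟩
  have hperiodic (n : ℤ) : Function.Periodic (fun a : ℤ => e ((a * n + b * n₂ : ℤ) / q)) q :=
    fun a => by
      simp only [show (a + q) * n + b * n₂ = a * n + b * n₂ + q * n by ring,
        e_intCast_add_mul_div hq.ne']
  simp only [klSummand]
  rw [(hperiodic n₁).sum_range_ite_dvd_mul_sub hq hu, (hperiodic _).sum_range_ite_dvd_mul_sub hq hu]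
  ring_nf

lemma Kl_one_eq_sum_coprime_s16 (N : ℤ) :
    Kl 1 N n₂ q = ∑ b ∈ range q with b.Coprime q, ∑ a ∈ range q, klSummand q 1 N n₂ a b := by
  rw [Kl_eq_sum_range_sum_range]
  refine (sum_filter_of_ne fun b _ hb => ?_).symm
  obtain ⟨a, -, ha⟩ := exists_ne_zero_of_sum_ne_zero hb
  obtain ⟨k, hk⟩ : (q : ℤ) ∣ a * b - 1 := by
    by_contra h
    exact ha (if_neg h)
  exact Nat.isCoprime_iff_coprime.1 ⟨a, -k, by linear_combination hk⟩

end klSummand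

lemma sum_klSummand_mul_eq {q d : ℕ} (hd : 0 < d) (hq : 0 < q) (m n₁ : ℕ) (n₂ : ℤ) {b : ℕ}
    (hb : b.Coprime q) :
    ∑ a ∈ range (d * q), klSummand (d * q) m n₁ n₂ a (d * b) =
      if d ∣ m ∧ d ∣ n₁ then d * ∑ a ∈ range q, klSummand q 1 (m * n₁ / d ^ 2 : ℕ) n₂ a b
      else 0 := by
  by_cases hn₁ : d ∣ n₁
  swap
  · -- Shifting `a` by `q` multiplies the summand by `e(n₁/d) ≠ 1`.
    have hz : e ((n₁ : ℤ) / d) ≠ 1 := by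
      rw [Ne, e_intCast_div_eq_one_iff hd]
      exact_mod_cast hn₁
    rw [if_neg fun h => hn₁ h.2]
    exact (klSummand_periodic_left (mul_ne_zero hd.ne' hq.ne') _
      ).sum_range_eq_zero_of_map_add_eq_mul hz fun a => klSummand_add_mul hd.ne' hq.ne' a b
  by_cases hm : d ∣ m
  swap
  · rw [if_neg fun h => hm h.1]
    exact sum_eq_zero fun a _ => klSummand_eq_zero_of_not_dvd (by exact_mod_cast hm) a b
  obtain ⟨m', rfl⟩ := hm
  obtain ⟨n₁', rfl⟩ := hn₁
  have hdiv : d * m' * (d * n₁') / d ^ 2 = m' * n₁' :=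
    Nat.div_eq_of_eq_mul_right (by positivity) (by ring)
  rw [if_pos ⟨dvd_mul_right d m', dvd_mul_right d n₁'⟩, hdiv]
  push_cast
  simp only [klSummand_mul hd.ne']
  rw [(klSummand_periodic_left hq.ne' b).sum_range_mul, nsmul_eq_mul,
    sum_klSummand_eq_of_isCoprime hq (Nat.isCoprime_iff_coprime.2 hb)]

theorem Kl_eq_sum_divisors_gcd {m : ℕ} (hm : m ≠ 0) (n₁ : ℕ) (n₂ : ℤ) (q : ℕ) :
    Kl m n₁ n₂ q = ∑ d ∈ (m.gcd n₁).divisors,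
      if d ∣ q then (d : ℂ) * Kl 1 (m * n₁ / d ^ 2 : ℕ) n₂ (q / d) else 0 := by
  rcases q.eq_zero_or_pos with rfl | hq
  · simp [Kl]
  rw [Kl_eq_sum_range_sum_range, Nat.sum_range_eq_sum_divisors_sum_coprime hq.ne']
  have hd_term : ∀ d ∈ q.divisors,
      ∑ b ∈ range (q / d) with b.Coprime (q / d), ∑ a ∈ range q, klSummand q m n₁ n₂ a (d * b : ℕ)
        = if d ∣ m ∧ d ∣ n₁ then (d : ℂ) * Kl 1 (m * n₁ / d ^ 2 : ℕ) n₂ (q / d) else 0 := by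
    intro d hd
    obtain ⟨⟨k, rfl⟩, hdk⟩ := Nat.mem_divisors.1 hd
    have hd0 : 0 < d := Nat.pos_of_ne_zero (left_ne_zero_of_mul hdk)
    have hk0 : 0 < k := Nat.pos_of_ne_zero (right_ne_zero_of_mul hdk)
    rw [Nat.mul_div_cancel_left k hd0, Kl_one_eq_sum_coprime_s16, mul_sum, sum_congr rfl fun b hb => by
      rw [Nat.cast_mul, sum_klSummand_mul_eq hd0 hk0 m n₁ n₂ (mem_filter.1 hb).2]]
    split_ifs <;> simp
  rw [sum_congr rfl hd_term, ← sum_filter, ← sum_filter]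
  refine sum_congr ?_ fun _ _ => rfl
  ext d
  simp only [mem_filter, Nat.mem_divisors, Nat.dvd_gcd_iff, ne_eq, Nat.gcd_eq_zero_iff, hm,
    hq.ne', false_and, not_false_eq_true, and_true]
  tauto

lemma summable_norm_and_tsum_eq_of_eq_sum_extend_mul {E : Type*} [NormedAddCommGroup E]
    [CompleteSpace E] {f : ℕ → E} {D : Finset ℕ} {g : ℕ → ℕ → E} (hD : ∀ d ∈ D, d ≠ 0)
    (hf : ∀ q, f q = ∑ d ∈ D, Function.extend (d * ·) (g d) 0 q)
    (hg : ∀ d ∈ D, Summable fun k => ‖g d k‖) :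
    Summable (fun q => ‖f q‖) ∧ ∑' q, f q = ∑ d ∈ D, ∑' k, g d k := by
  have hinj : ∀ d ∈ D, Function.Injective (d * ·) := fun d hd => mul_right_injective₀ (hD d hd)
  have hext : ∀ d ∈ D, Summable fun q => ‖Function.extend (d * ·) (g d) 0 q‖ := by
    intro d hd
    refine ((hinj d hd).summable_iff fun q hq => ?_).1 ?_
    · rw [Function.extend_apply' _ _ _ hq, Pi.zero_apply, norm_zero]
    · simpa only [Function.comp_def, (hinj d hd).extend_apply] using hg d hd
  refine ⟨.of_nonneg_of_le (fun _ => norm_nonneg _) (fun q => ?_) (summable_sum hext), ?_⟩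
  · rw [hf]
    exact norm_sum_le _ _
  · rw [tsum_congr hf, Summable.tsum_finsetSum fun d hd => (hext d hd).of_norm]
    exact sum_congr rfl fun d hd => tsum_extend_zero (hinj d hd) (g d)

noncomputable def klSeriesTerm (m n₁ n₂ : ℤ) (φ : ℝ → ℂ) (X : ℝ) (q : ℕ) : ℂ :=
  Kl m n₁ n₂ q / q * φ (X / q)

lemma klSeriesTerm_zero (m n₁ n₂ : ℤ) (φ : ℝ → ℂ) (X : ℝ) : klSeriesTerm m n₁ n₂ φ X 0 = 0 := by
  simp [klSeriesTerm]

lemma klSeriesTerm_eq_sum_extend {m : ℕ} (hm : m ≠ 0) (n₁ : ℕ) (n₂ : ℤ) (φ : ℝ → ℂ) (X : ℝ)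
    (q : ℕ) :
    klSeriesTerm m n₁ n₂ φ X q = ∑ d ∈ (m.gcd n₁).divisors,
      Function.extend (d * ·) (klSeriesTerm 1 (m * n₁ / d ^ 2 : ℕ) n₂ φ (X / d)) 0 q := by
  rw [klSeriesTerm, Kl_eq_sum_divisors_gcd hm, sum_div, sum_mul]
  refine sum_congr rfl fun d hd => ?_
  have hd0 : d ≠ 0 := (Nat.pos_of_mem_divisors hd).ne'
  by_cases hdq : d ∣ q
  · obtain ⟨k, rfl⟩ := hdq
    rw [if_pos (dvd_mul_right d k), (mul_right_injective₀ hd0).extend_apply, klSeriesTerm,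
      Nat.mul_div_cancel_left k (Nat.pos_of_ne_zero hd0), Nat.cast_mul, Nat.cast_mul,
      mul_div_mul_left _ _ (Nat.cast_ne_zero.2 hd0), div_div]
  · rw [if_neg hdq, zero_div, zero_mul,
      Function.extend_apply' _ _ _ fun ⟨k, hk⟩ => hdq ⟨k, hk.symm⟩, Pi.zero_apply]

theorem kloosterman_sum_rearrangement_general (m n₁ n₂ : ℕ)
    (hm : 0 < m) (φ : ℝ → ℂ)
    (habs : ∀ d ∈ (Nat.gcd m n₁).divisors,
      Summable (fun q : ℕ =>
        ‖Kl 1 ((m * n₁ / d ^ 2 : ℕ) : ℤ) (n₂ : ℤ) (q + 1)‖ *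
          ‖φ (4 * Real.pi * Real.sqrt ((m : ℝ) * n₁ * n₂) / (((q : ℝ) + 1) * d))‖ /
            ((q : ℝ) + 1))) :
    Summable (fun q : ℕ =>
      ‖Kl (m : ℤ) (n₁ : ℤ) (n₂ : ℤ) (q + 1) / ((q + 1 : ℕ) : ℂ) *
        φ (4 * Real.pi * Real.sqrt ((m : ℝ) * n₁ * n₂) / ((q : ℝ) + 1))‖) ∧
    ∑' q : ℕ, Kl (m : ℤ) (n₁ : ℤ) (n₂ : ℤ) (q + 1) / ((q + 1 : ℕ) : ℂ) *
        φ (4 * Real.pi * Real.sqrt ((m : ℝ) * n₁ * n₂) / ((q : ℝ) + 1))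
      = ∑ d ∈ (Nat.gcd m n₁).divisors, ∑' q : ℕ,
          Kl 1 ((m * n₁ / d ^ 2 : ℕ) : ℤ) (n₂ : ℤ) (q + 1) / ((q + 1 : ℕ) : ℂ) *
            φ (4 * Real.pi * Real.sqrt ((m : ℝ) * n₁ * n₂) / (((q : ℝ) + 1) * d)) := by
  set X := 4 * Real.pi * Real.sqrt ((m : ℝ) * n₁ * n₂)
  have hlhs (q : ℕ) : Kl m n₁ n₂ (q + 1) / ((q + 1 : ℕ) : ℂ) * φ (X / ((q : ℝ) + 1)) =
      klSeriesTerm m n₁ n₂ φ X (q + 1) := by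
    simp [klSeriesTerm]
  have hrhs (d q : ℕ) : Kl 1 (m * n₁ / d ^ 2 : ℕ) n₂ (q + 1) / ((q + 1 : ℕ) : ℂ) *
      φ (X / (((q : ℝ) + 1) * d)) = klSeriesTerm 1 (m * n₁ / d ^ 2 : ℕ) n₂ φ (X / d) (q + 1) := by
    simp [klSeriesTerm, div_div, mul_comm]
  have hg : ∀ d ∈ (m.gcd n₁).divisors,
      Summable fun q => ‖klSeriesTerm 1 (m * n₁ / d ^ 2 : ℕ) n₂ φ (X / d) q‖ := by
    intro d hd
    refine (summable_nat_add_iff 1).1 ((habs d hd).congr fun q => ?_)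
    rw [← hrhs, norm_mul, norm_div, Complex.norm_natCast]
    push_cast
    ring
  obtain ⟨hsum, htsum⟩ := summable_norm_and_tsum_eq_of_eq_sum_extend_mul
    (fun d hd => (Nat.pos_of_mem_divisors hd).ne') (klSeriesTerm_eq_sum_extend hm.ne' n₁ n₂ φ X) hg
  simp only [hlhs, hrhs]
  have hshift (f : ℕ → ℂ) (hf : f 0 = 0) : ∑' q, f (q + 1) = ∑' q, f q :=
    Nat.succ_injective.tsum_eq fun q hq =>
      ⟨q.pred, Nat.succ_pred_eq_of_ne_zero (by rintro rfl; exact hq hf)⟩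
  refine ⟨(summable_nat_add_iff 1).2 hsum, ?_⟩
  simp only [hshift _ (klSeriesTerm_zero _ _ _ _ _), htsum]

theorem kloosterman_sum_rearrangement (m n₁ n₂ : ℕ)
    (hm : 0 < m) (hn₁ : 0 < n₁) (hn₂ : 0 < n₂) (φ : ℝ → ℂ)
    (habs : ∀ d ∈ (Nat.gcd m n₁).divisors,
      Summable (fun q : ℕ =>
        ‖Kl 1 ((m * n₁ / d ^ 2 : ℕ) : ℤ) (n₂ : ℤ) (q + 1)‖ *
          ‖φ (4 * Real.pi * Real.sqrt ((m : ℝ) * n₁ * n₂) / (((q : ℝ) + 1) * d))‖ /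
            ((q : ℝ) + 1))) :
    Summable (fun q : ℕ =>
      ‖Kl (m : ℤ) (n₁ : ℤ) (n₂ : ℤ) (q + 1) / ((q + 1 : ℕ) : ℂ) *
        φ (4 * Real.pi * Real.sqrt ((m : ℝ) * n₁ * n₂) / ((q : ℝ) + 1))‖) ∧
    ∑' q : ℕ, Kl (m : ℤ) (n₁ : ℤ) (n₂ : ℤ) (q + 1) / ((q + 1 : ℕ) : ℂ) *
        φ (4 * Real.pi * Real.sqrt ((m : ℝ) * n₁ * n₂) / ((q : ℝ) + 1))
      = ∑ d ∈ (Nat.gcd m n₁).divisors, ∑' q : ℕ,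
          Kl 1 ((m * n₁ / d ^ 2 : ℕ) : ℤ) (n₂ : ℤ) (q + 1) / ((q + 1 : ℕ) : ℂ) *
            φ (4 * Real.pi * Real.sqrt ((m : ℝ) * n₁ * n₂) / (((q : ℝ) + 1) * d)) :=
  kloosterman_sum_rearrangement_general m n₁ n₂ hm φ habs
end
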